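/- arXiv:2603.10853 — 8 statements merged into one kernel-verified Lean document; each statement's English description precedes it below -/
import Mathlib

section
/- Let G be a finite simple graph on N vertices with M edges, adjacency matrix A, orthonormal eigenbasis {u_k} with eigenvalues ε_k, degree vector d, and uniform overlaps w_k = (𝟙ᵀu_k)². Then the sum over all indices k with ε_k < 0 of w_k·|ε_k| is at most (1/2)·(‖d‖₂·√N − 2M), where ‖d‖₂ = (Σ_i d_i²)^{1/2}. -/
/-- For a finite simple graph `G` on `N` vertices with adjacency matrix
`A = G.adjMatrix ℝ`, orthonormal eigenbasis `u k` with eigenvalues `ε k`, degrees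
`d i = G.degree i`, `M = G.edgeFinset.card` edges, and uniform overlaps
`w k = (𝟙ᵀ u k)²`, the sum over negative-eigenvalue modes of `w k * |ε k|` is at most
`(1/2) * (‖d‖₂ * √N - 2M)`. -/
theorem stmt_0 {N : ℕ} (G : SimpleGraph (Fin N)) [DecidableRel G.Adj]
    (u : Fin N → Fin N → ℝ) (ε : Fin N → ℝ)
    (horth : ∀ k l, (∑ i, u k i * u l i) = if k = l then (1 : ℝ) else 0)
    (heig : ∀ k, (G.adjMatrix ℝ).mulVec (u k) = ε k • u k) :
    ∑ k ∈ Finset.univ.filter (fun k => ε k < 0), (∑ i, u k i) ^ 2 * |ε k| ≤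
      (1 / 2) * (Real.sqrt (∑ i, ((G.degree i : ℝ)) ^ 2) * Real.sqrt N -
        2 * (G.edgeFinset.card : ℝ)) := by
  classical
  set A := G.adjMatrix ℝ with hA
  set c : Fin N → ℝ := fun k => ∑ i, u k i with hc
  set dv : Fin N → ℝ := fun i => (G.degree i : ℝ) with hdv
  -- the matrix U with rows u k
  set U : Matrix (Fin N) (Fin N) ℝ := Matrix.of u with hU
  have hUUt : U * U.transpose = 1 := by
    ext k l
    simpa [Matrix.mul_apply, Matrix.one_apply, hU] using horth k l
  have hUtU : U.transpose * U = 1 := mul_eq_one_comm.mp hUUt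
  have hcol : ∀ i j : Fin N, (∑ k, u k i * u k j) = if i = j then (1 : ℝ) else 0 := by
    intro i j
    have := congrFun (congrFun hUtU i) j
    simpa [Matrix.mul_apply, Matrix.one_apply, hU] using this
  -- Parseval-type identity
  have key : ∀ v w : Fin N → ℝ,
      (∑ k, (∑ i, u k i * v i) * (∑ i, u k i * w i)) = ∑ i, v i * w i := by
    intro v w
    have h1 : ∀ k, (∑ i, u k i * v i) * (∑ i, u k i * w i)
        = ∑ i, ∑ j, v i * w j * (u k i * u k j) := by
      intro k
      rw [Finset.sum_mul_sum]
      exact Finset.sum_congr rfl fun i _ => Finset.sum_congr rfl fun j _ => by ring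
    simp_rw [h1]
    rw [Finset.sum_comm]
    have h2 : ∀ i, (∑ k, ∑ j, v i * w j * (u k i * u k j)) = v i * w i := by
      intro i
      rw [Finset.sum_comm]
      have h3 : ∀ j, (∑ k, v i * w j * (u k i * u k j))
          = v i * w j * (if i = j then (1:ℝ) else 0) := by
        intro j
        rw [← Finset.mul_sum, hcol]
      simp_rw [h3]
      simp [Finset.mul_sum]
    exact Finset.sum_congr rfl fun i _ => h2 i
  -- u_k ⬝ d = ε k * c k
  have hud : ∀ k, (∑ i, u k i * dv i) = ε k * c k := by
    intro k
    have hdeg : ∀ i, dv i = ∑ j, A i j := by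
      intro i
      simp [hdv, hA, SimpleGraph.adjMatrix, SimpleGraph.degree, SimpleGraph.neighborFinset_eq_filter,
        Finset.sum_ite_eq, Finset.sum_boole]
    calc (∑ i, u k i * dv i) = ∑ i, ∑ j, u k i * A i j := by
          simp_rw [hdeg, Finset.mul_sum]
      _ = ∑ j, ∑ i, A j i * u k i := by
          rw [Finset.sum_comm]
          exact Finset.sum_congr rfl fun j _ => Finset.sum_congr rfl fun i _ => by
            rw [show A i j = A j i from by simp [hA, SimpleGraph.adj_comm]]; ring
      _ = ∑ j, (A.mulVec (u k)) j := rfl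
      _ = ∑ j, ε k * u k j := by rw [heig k]; rfl
      _ = ε k * c k := by rw [← Finset.mul_sum]
  -- the three scalar identities
  have hN : (∑ k, c k ^ 2) = (N : ℝ) := by
    have := key (fun _ => 1) (fun _ => 1)
    simpa [hc, pow_two] using this
  have hE2 : (∑ k, (ε k * c k) ^ 2) = ∑ i, dv i ^ 2 := by
    have := key dv dv
    simp_rw [hud, pow_two] at this ⊢
    exact this
  have hM : (∑ k, ε k * c k ^ 2) = 2 * (G.edgeFinset.card : ℝ) := by
    have h := key dv (fun _ => 1)
    simp_rw [hud] at h
    have h2 : (∑ k, ε k * c k * c k) = ∑ i, dv i := by simpa [hc] using h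
    have h3 : (∑ i, dv i) = 2 * (G.edgeFinset.card : ℝ) := by
      have := G.sum_degrees_eq_twice_card_edges
      have : ((∑ i, G.degree i : ℕ) : ℝ) = ((2 * G.edgeFinset.card : ℕ) : ℝ) := by rw [this]
      simpa [hdv] using this
    rw [← h3, ← h2]
    exact Finset.sum_congr rfl fun k _ => by ring
  -- Cauchy-Schwarz
  have hCS : (∑ k, c k ^ 2 * |ε k|) ≤
      Real.sqrt (∑ i, dv i ^ 2) * Real.sqrt N := by
    have h := Real.sum_mul_le_sqrt_mul_sqrt Finset.univ (fun k => |ε k * c k|) (fun k => |c k|)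
    have heq : (∑ k, |ε k * c k| * |c k|) = ∑ k, c k ^ 2 * |ε k| := by
      refine Finset.sum_congr rfl fun k _ => ?_
      rw [abs_mul, ← sq_abs (c k)]
      ring
    rw [heq] at h
    simp_rw [sq_abs] at h
    rw [hE2, hN] at h
    exact h
  -- split the sum
  have hsplit : (2 : ℝ) * ∑ k ∈ Finset.univ.filter (fun k => ε k < 0), c k ^ 2 * |ε k|
      = (∑ k, c k ^ 2 * |ε k|) - ∑ k, ε k * c k ^ 2 := by
    rw [Finset.mul_sum, ← Finset.sum_sub_distrib,
      ← Finset.sum_filter_add_sum_filter_not Finset.univ (fun k => ε k < 0)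
        (fun k => c k ^ 2 * |ε k| - ε k * c k ^ 2)]
    have hpos : (∑ k ∈ Finset.univ.filter (fun k => ¬ ε k < 0),
        (c k ^ 2 * |ε k| - ε k * c k ^ 2)) = 0 := by
      refine Finset.sum_eq_zero fun k hk => ?_
      have hk' : 0 ≤ ε k := le_of_not_gt (Finset.mem_filter.mp hk).2
      rw [abs_of_nonneg hk']; ring
    rw [hpos, add_zero]
    refine Finset.sum_congr rfl fun k hk => ?_
    have hk' : ε k < 0 := (Finset.mem_filter.mp hk).2
    rw [abs_of_neg hk']; ring
  have hsum_le : (∑ k, c k ^ 2 * |ε k|) - ∑ k, ε k * c k ^ 2 ≤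
      Real.sqrt (∑ i, dv i ^ 2) * Real.sqrt N - 2 * (G.edgeFinset.card : ℝ) := by
    rw [hM]; linarith [hCS]
  have final : (2:ℝ) * ∑ k ∈ Finset.univ.filter (fun k => ε k < 0), c k ^ 2 * |ε k| ≤
      Real.sqrt (∑ i, dv i ^ 2) * Real.sqrt N - 2 * (G.edgeFinset.card : ℝ) := by
    rw [hsplit]; exact hsum_le
  have : ∑ k ∈ Finset.univ.filter (fun k => ε k < 0), (∑ i, u k i) ^ 2 * |ε k|
      = ∑ k ∈ Finset.univ.filter (fun k => ε k < 0), c k ^ 2 * |ε k| := rfl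
  rw [this]
  linarith [final]
end

section
/- Let G be a finite simple graph on N vertices with M ≥ 1 edges, adjacency matrix A, orthonormal eigenbasis {u_k} with eigenvalues ε_k, degree vector d, and uniform overlaps w_k = (𝟙ᵀu_k)². Assume the sum ε₊ of the positive eigenvalues of A satisfies ε₊ ≥ √M. Then (Σ_{k : ε_k < 0} w_k·|ε_k|) / ε₊ ≤ ‖d‖₂·√N/(2·√M) − √M. -/
/-- For a finite simple graph `G` with `M ≥ 1` edges, adjacency matrix
`A = G.adjMatrix ℝ`, orthonormal eigenbasis `u k` with eigenvalues `ε k`, degrees `d`,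
and uniform overlaps `w k = (𝟙ᵀ u k)²`: assuming the sum of positive eigenvalues `ε₊`
satisfies `ε₊ ≥ √M`, the ratio `(Σ_{ε_k<0} w_k |ε_k|) / ε₊` is at most
`‖d‖₂ √N / (2 √M) - √M`. -/
theorem stmt_1 {N : ℕ} (G : SimpleGraph (Fin N)) [DecidableRel G.Adj]
    (u : Fin N → Fin N → ℝ) (ε : Fin N → ℝ)
    (horth : ∀ k l, (∑ i, u k i * u l i) = if k = l then (1 : ℝ) else 0)
    (heig : ∀ k, (G.adjMatrix ℝ).mulVec (u k) = ε k • u k)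
    (hM : 1 ≤ G.edgeFinset.card)
    (hεplus : Real.sqrt (G.edgeFinset.card : ℝ) ≤
      ∑ k ∈ Finset.univ.filter (fun k => 0 < ε k), ε k) :
    (∑ k ∈ Finset.univ.filter (fun k => ε k < 0), (∑ i, u k i) ^ 2 * |ε k|) /
        (∑ k ∈ Finset.univ.filter (fun k => 0 < ε k), ε k) ≤
      Real.sqrt (∑ i, ((G.degree i : ℝ)) ^ 2) * Real.sqrt N /
          (2 * Real.sqrt (G.edgeFinset.card : ℝ)) -
        Real.sqrt (G.edgeFinset.card : ℝ) := by
  -- dual orthonormality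
  have hdual : ∀ i j, (∑ k, u k i * u k j) = if i = j then (1 : ℝ) else 0 := by
    set U : Matrix (Fin N) (Fin N) ℝ := Matrix.of u with hU
    have h1 : U * U.transpose = 1 := by
      ext k l
      simpa [Matrix.mul_apply, Matrix.transpose_apply, Matrix.one_apply, hU] using horth k l
    have h2 : U.transpose * U = 1 := mul_eq_one_comm.mp h1
    intro i j
    have := congrFun (congrFun h2 i) j
    simpa [Matrix.mul_apply, Matrix.transpose_apply, Matrix.one_apply, hU] using this
  -- key bilinear identity
  have key : ∀ a b : Fin N → ℝ,
      (∑ k, (∑ i, a i * u k i) * (∑ j, b j * u k j)) = ∑ i, a i * b i := by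
    intro a b
    have h1 : ∀ k, (∑ i, a i * u k i) * (∑ j, b j * u k j)
        = ∑ i, ∑ j, a i * b j * (u k i * u k j) := by
      intro k
      rw [Finset.sum_mul_sum]
      exact Finset.sum_congr rfl fun i _ => Finset.sum_congr rfl fun j _ => by ring
    simp_rw [h1]
    rw [Finset.sum_comm]
    have h2 : ∀ i, (∑ k, ∑ j, a i * b j * (u k i * u k j))
        = ∑ j, a i * b j * (∑ k, u k i * u k j) := by
      intro i
      rw [Finset.sum_comm]
      exact Finset.sum_congr rfl fun j _ => by rw [Finset.mul_sum]
    simp_rw [h2, hdual, mul_ite, mul_one, mul_zero]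
    simp
  -- eigen relation summed
  have hes : ∀ k, ε k * (∑ i, u k i) = ∑ j, (G.degree j : ℝ) * u k j := by
    intro k
    have h := congrArg (fun v => ∑ i, v i) (heig k)
    simp only [Pi.smul_apply, smul_eq_mul, Finset.mul_sum] at h
    rw [Finset.mul_sum, ← h]
    have : ∀ i, ((G.adjMatrix ℝ).mulVec (u k)) i = ∑ j, (G.adjMatrix ℝ) i j * u k j := by
      intro i; rfl
    simp_rw [this]
    rw [Finset.sum_comm]
    refine Finset.sum_congr rfl fun j _ => ?_
    rw [← Finset.sum_mul]
    congr 1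
    have : (∑ i, (G.adjMatrix ℝ) i j) = ∑ i, (G.adjMatrix ℝ) j i := by
      refine Finset.sum_congr rfl fun i _ => ?_
      simp [SimpleGraph.adjMatrix_apply, G.adj_comm]
    rw [this]
    simp [SimpleGraph.adjMatrix_apply, SimpleGraph.degree, SimpleGraph.neighborFinset_eq_filter,
      Finset.sum_ite, Finset.filter_filter]
  set w : Fin N → ℝ := fun k => (∑ i, u k i) ^ 2 with hw
  set m : ℝ := (G.edgeFinset.card : ℝ) with hm
  set D : ℝ := ∑ i, ((G.degree i : ℝ)) ^ 2 with hD
  -- Σ w = N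
  have hNsum : (∑ k, w k) = (N : ℝ) := by
    have := key (fun _ => (1 : ℝ)) (fun _ => (1 : ℝ))
    simpa [hw, sq] using this
  -- Σ w ε = 2m
  have h2m : (∑ k, w k * ε k) = 2 * m := by
    have h1 : (∑ k, (∑ i, (1 : ℝ) * u k i) * (∑ j, (G.degree j : ℝ) * u k j))
        = ∑ i, (1 : ℝ) * (G.degree i : ℝ) := key _ _
    simp only [one_mul] at h1
    have h2 : (∑ k, w k * ε k) = ∑ k, (∑ i, u k i) * (∑ j, (G.degree j : ℝ) * u k j) := by
      refine Finset.sum_congr rfl fun k _ => ?_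
      rw [← hes k, hw]; ring
    rw [h2, h1]
    have := G.sum_degrees_eq_twice_card_edges
    have h3 : (∑ i, (G.degree i : ℝ)) = ((∑ i, G.degree i : ℕ) : ℝ) := by push_cast; ring
    rw [h3, this]; push_cast [hm]; ring
  -- Σ w ε² = D
  have hDsum : (∑ k, w k * ε k ^ 2) = D := by
    have h1 := key (fun j => (G.degree j : ℝ)) (fun j => (G.degree j : ℝ))
    have h2 : (∑ k, w k * ε k ^ 2)
        = ∑ k, (∑ i, (G.degree i : ℝ) * u k i) * (∑ j, (G.degree j : ℝ) * u k j) := by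
      refine Finset.sum_congr rfl fun k _ => ?_
      rw [← hes k, hw]; ring
    rw [h2, h1, hD]
    exact Finset.sum_congr rfl fun i _ => (sq _).symm
  -- Cauchy–Schwarz
  have hCS : (∑ k, w k * |ε k|) ≤ Real.sqrt D * Real.sqrt (N : ℝ) := by
    have h1 : (∑ k, w k * |ε k|) ^ 2 ≤ (∑ k, w k * ε k ^ 2) * (∑ k, w k) := by
      have := Finset.sum_mul_sq_le_sq_mul_sq Finset.univ
        (fun k => |(∑ i, u k i)| * |ε k|) (fun k => |(∑ i, u k i)|)
      calc (∑ k, w k * |ε k|) ^ 2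
          = (∑ k, (|(∑ i, u k i)| * |ε k|) * |(∑ i, u k i)|) ^ 2 := by
            congr 1; refine Finset.sum_congr rfl fun k _ => ?_
            show (∑ i, u k i) ^ 2 * |ε k| = |∑ i, u k i| * |ε k| * |∑ i, u k i|
            rw [show |∑ i, u k i| * |ε k| * |∑ i, u k i| = |∑ i, u k i| ^ 2 * |ε k| by ring,
              sq_abs]
        _ ≤ (∑ k, (|(∑ i, u k i)| * |ε k|) ^ 2) * ∑ k, |(∑ i, u k i)| ^ 2 := this
        _ = (∑ k, w k * ε k ^ 2) * (∑ k, w k) := by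
            congr 1
            · refine Finset.sum_congr rfl fun k _ => ?_
              rw [mul_pow, sq_abs, sq_abs, hw]
            · exact Finset.sum_congr rfl fun k _ => by rw [sq_abs, hw]
    rw [hDsum, hNsum] at h1
    have hnn : (0 : ℝ) ≤ ∑ k, w k * |ε k| :=
      Finset.sum_nonneg fun k _ => mul_nonneg (sq_nonneg _) (abs_nonneg _)
    calc (∑ k, w k * |ε k|) = Real.sqrt ((∑ k, w k * |ε k|) ^ 2) := (Real.sqrt_sq hnn).symm
      _ ≤ Real.sqrt (D * (N : ℝ)) := Real.sqrt_le_sqrt h1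
      _ = Real.sqrt D * Real.sqrt (N : ℝ) := Real.sqrt_mul (by
          rw [hD]; exact Finset.sum_nonneg fun i _ => sq_nonneg _) _
  -- identify Neg
  set Neg : ℝ := ∑ k ∈ Finset.univ.filter (fun k => ε k < 0), w k * |ε k| with hNeg
  have hNegid : 2 * Neg = (∑ k, w k * |ε k|) - (∑ k, w k * ε k) := by
    rw [hNeg, ← Finset.sum_sub_distrib, Finset.sum_filter]
    rw [Finset.mul_sum]
    refine Finset.sum_congr rfl fun k _ => ?_
    rcases lt_trichotomy (ε k) 0 with h | h | h
    · rw [if_pos h, abs_of_neg h]; ring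
    · simp [h]
    · rw [if_neg (not_lt.mpr h.le), abs_of_pos h]; ring
  have hNegle : Neg ≤ (Real.sqrt D * Real.sqrt (N : ℝ) - 2 * m) / 2 := by
    have : 2 * Neg ≤ Real.sqrt D * Real.sqrt (N : ℝ) - 2 * m := by
      rw [hNegid, h2m]; linarith [hCS]
    linarith
  have hNegnn : 0 ≤ Neg :=
    Finset.sum_nonneg fun k _ => mul_nonneg (sq_nonneg _) (abs_nonneg _)
  -- final arithmetic
  set E : ℝ := ∑ k ∈ Finset.univ.filter (fun k => 0 < ε k), ε k with hE
  have hm1 : (1 : ℝ) ≤ m := by rw [hm]; exact_mod_cast hM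
  have hsM : (1 : ℝ) ≤ Real.sqrt m := by
    rw [show (1:ℝ) = Real.sqrt 1 from (Real.sqrt_one).symm]
    exact Real.sqrt_le_sqrt hm1
  have hsMpos : (0 : ℝ) < Real.sqrt m := lt_of_lt_of_le one_pos hsM
  have hEpos : (0 : ℝ) < E := lt_of_lt_of_le hsMpos hεplus
  have step1 : Neg / E ≤ Neg / Real.sqrt m :=
    div_le_div_of_nonneg_left hNegnn hsMpos hεplus |>.trans_eq rfl
  have step2 : Neg / Real.sqrt m ≤ (Real.sqrt D * Real.sqrt (N : ℝ) - 2 * m) / (2 * Real.sqrt m) := by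
    rw [div_le_div_iff₀ hsMpos (by positivity)]
    calc Neg * (2 * Real.sqrt m) = (2 * Neg) * Real.sqrt m := by ring
      _ ≤ (Real.sqrt D * Real.sqrt (N : ℝ) - 2 * m) * Real.sqrt m := by
          apply mul_le_mul_of_nonneg_right _ hsMpos.le
          linarith [hNegle]
  have hmsq : Real.sqrt m * Real.sqrt m = m := Real.mul_self_sqrt (by linarith)
  have step3 : (Real.sqrt D * Real.sqrt (N : ℝ) - 2 * m) / (2 * Real.sqrt m)
      = Real.sqrt D * Real.sqrt (N : ℝ) / (2 * Real.sqrt m) - Real.sqrt m := by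
    field_simp
    ring_nf
    nlinarith [hmsq]
  calc Neg / E ≤ Neg / Real.sqrt m := step1
    _ ≤ (Real.sqrt D * Real.sqrt (N : ℝ) - 2 * m) / (2 * Real.sqrt m) := step2
    _ = _ := by rw [step3]
end

section
/- For any finite simple graph G with M edges and real adjacency eigenvalues ε_1, …, ε_N, the sum of the positive eigenvalues satisfies Σ_{k : ε_k > 0} ε_k ≥ √M. -/
/-- For any finite simple graph `G` with `M` edges whose adjacency matrix
has eigenvalues `ε k` (counted with multiplicity, realized by an orthonormal eigenbasis
`u k`), the sum of the positive eigenvalues is at least `√M`. -/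
theorem stmt_2 {N : ℕ} (G : SimpleGraph (Fin N)) [DecidableRel G.Adj]
    (u : Fin N → Fin N → ℝ) (ε : Fin N → ℝ)
    (horth : ∀ k l, (∑ i, u k i * u l i) = if k = l then (1 : ℝ) else 0)
    (heig : ∀ k, (G.adjMatrix ℝ).mulVec (u k) = ε k • u k) :
    Real.sqrt (G.edgeFinset.card : ℝ) ≤
      ∑ k ∈ Finset.univ.filter (fun k => 0 < ε k), ε k := by
  classical
  set A : Matrix (Fin N) (Fin N) ℝ := G.adjMatrix ℝ with hA
  -- column orthonormality
  have hcol : ∀ i j, (∑ k, u k i * u k j) = if i = j then (1 : ℝ) else 0 := by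
    have hU : (Matrix.of u) * (Matrix.of u).transpose = 1 := by
      ext k l
      simpa [Matrix.mul_apply, Matrix.one_apply] using horth k l
    have hU' : (Matrix.of u).transpose * (Matrix.of u) = 1 := mul_eq_one_comm.mp hU
    intro i j
    have := congrFun (congrFun hU' i) j
    simpa [Matrix.mul_apply, Matrix.one_apply] using this
  have heig' : ∀ k i, (∑ j, A i j * u k j) = ε k * u k i := by
    intro k i
    have := congrFun (heig k) i
    simpa [Matrix.mulVec, dotProduct, hA] using this
  have hnorm : ∀ k, (∑ i, u k i * u k i) = 1 := by
    intro k; simpa using horth k k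
  -- trace : sum of eigenvalues is 0
  have htr : (∑ k, ε k) = 0 := by
    have h1 : (∑ k, ε k) = ∑ k, ∑ i, (∑ j, A i j * u k j) * u k i := by
      refine Finset.sum_congr rfl fun k _ => ?_
      simp_rw [heig']
      have : (∑ i, ε k * u k i * u k i) = ε k * ∑ i, u k i * u k i := by
        rw [Finset.mul_sum]
        exact Finset.sum_congr rfl fun i _ => by ring
      rw [this, hnorm, mul_one]
    rw [h1, Finset.sum_comm]
    have h2 : ∀ i : Fin N, (∑ k, (∑ j, A i j * u k j) * u k i) = A i i := by
      intro i
      have : (∑ k, (∑ j, A i j * u k j) * u k i)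
          = ∑ j, A i j * ∑ k, u k j * u k i := by
        simp_rw [Finset.sum_mul]
        rw [Finset.sum_comm]
        simp_rw [mul_assoc, ← Finset.mul_sum]
      rw [this]
      simp [hcol]
    simp_rw [h2]
    simp [hA, SimpleGraph.adjMatrix_apply]
  -- sum of squares of eigenvalues is 2M
  have hsq : (∑ k, ε k * ε k) = 2 * (G.edgeFinset.card : ℝ) := by
    have h1 : (∑ k, ε k * ε k)
        = ∑ k, ∑ i, (∑ j, A i j * u k j) * (∑ j, A i j * u k j) := by
      refine Finset.sum_congr rfl fun k _ => ?_
      simp_rw [heig']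
      have : (∑ i, ε k * u k i * (ε k * u k i))
          = ε k * ε k * ∑ i, u k i * u k i := by
        rw [Finset.mul_sum]
        exact Finset.sum_congr rfl fun i _ => by ring
      rw [this, hnorm, mul_one]
    have h2 : ∀ i : Fin N,
        (∑ k, (∑ j, A i j * u k j) * (∑ j, A i j * u k j))
          = ∑ j, A i j * A i j := by
      intro i
      have e1 : (∑ k, (∑ j, A i j * u k j) * (∑ j, A i j * u k j))
          = ∑ j, ∑ l, A i j * A i l * ∑ k, u k j * u k l := by
        simp_rw [Finset.sum_mul_sum]
        rw [Finset.sum_comm]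
        refine Finset.sum_congr rfl fun j _ => ?_
        rw [Finset.sum_comm]
        refine Finset.sum_congr rfl fun l _ => ?_
        rw [Finset.mul_sum]
        refine Finset.sum_congr rfl fun k _ => ?_
        ring
      rw [e1]
      refine Finset.sum_congr rfl fun j _ => ?_
      rw [Finset.sum_eq_single j]
      · simp [hcol]
      · intro l _ hl
        rw [hcol, if_neg (fun h : j = l => hl h.symm), mul_zero]
      · intro h; exact absurd (Finset.mem_univ j) h
    rw [h1, Finset.sum_comm]
    simp_rw [h2]
    have h3 : ∀ i j : Fin N, A i j * A i j = A i j := by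
      intro i j
      by_cases h : G.Adj i j <;> simp [hA, h]
    simp_rw [h3]
    have h4 : ∀ i : Fin N, (∑ j, A i j) = (G.degree i : ℝ) := by
      intro i
      have := SimpleGraph.adjMatrix_mulVec_const_apply (α := ℝ) (G := G) (a := 1) (v := i)
      simpa [Matrix.mulVec, dotProduct, hA] using this
    simp_rw [h4]
    have h5 : (∑ i : Fin N, (G.degree i : ℝ)) = 2 * (G.edgeFinset.card : ℝ) := by
      rw [← Nat.cast_sum, G.sum_degrees_eq_twice_card_edges]
      push_cast
      ring
    rw [h5]
  -- the positive part
  set P : Finset (Fin N) := Finset.univ.filter (fun k => 0 < ε k) with hP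
  set s : ℝ := ∑ k ∈ P, ε k with hs
  have hs0 : 0 ≤ s := Finset.sum_nonneg fun k hk => le_of_lt (Finset.mem_filter.mp hk).2
  have hsplit : s + ∑ k ∈ Finset.univ.filter (fun k => ¬ 0 < ε k), ε k = 0 := by
    rw [hs, hP, Finset.sum_filter_add_sum_filter_not]
    exact htr
  have hnegsum : (∑ k ∈ Finset.univ.filter (fun k => ¬ 0 < ε k), (- ε k)) = s := by
    rw [Finset.sum_neg_distrib]
    linarith
  -- each positive eigenvalue is at most s
  have hle : ∀ k ∈ P, ε k ≤ s :=
    fun k hk => Finset.single_le_sum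
      (fun l hl => le_of_lt (Finset.mem_filter.mp hl).2) hk
  have hle' : ∀ k ∈ Finset.univ.filter (fun k => ¬ 0 < ε k), - ε k ≤ s := by
    intro k hk
    rw [← hnegsum]
    exact Finset.single_le_sum
      (fun l hl => by
        have h0 : ε l ≤ 0 := le_of_not_gt (Finset.mem_filter.mp hl).2
        show (0:ℝ) ≤ - ε l
        linarith) hk
  have hb1 : (∑ k ∈ P, ε k * ε k) ≤ s * s := by
    calc (∑ k ∈ P, ε k * ε k) ≤ ∑ k ∈ P, s * ε k := by
          refine Finset.sum_le_sum fun k hk => ?_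
          have hp := (Finset.mem_filter.mp hk).2
          exact mul_le_mul_of_nonneg_right (hle k hk) (le_of_lt hp)
      _ = s * s := by rw [← Finset.mul_sum, ← hs]
  have hb2 : (∑ k ∈ Finset.univ.filter (fun k => ¬ 0 < ε k), ε k * ε k) ≤ s * s := by
    calc (∑ k ∈ Finset.univ.filter (fun k => ¬ 0 < ε k), ε k * ε k)
        ≤ ∑ k ∈ Finset.univ.filter (fun k => ¬ 0 < ε k), s * (- ε k) := by
          refine Finset.sum_le_sum fun k hk => ?_
          have hnp := not_lt.mp (Finset.mem_filter.mp hk).2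
          have : ε k * ε k = (- ε k) * (- ε k) := by ring
          rw [this]
          exact mul_le_mul_of_nonneg_right (hle' k hk) (by linarith)
      _ = s * s := by rw [← Finset.mul_sum, hnegsum]
  have htotal : 2 * (G.edgeFinset.card : ℝ) ≤ 2 * (s * s) := by
    rw [← hsq, ← Finset.sum_filter_add_sum_filter_not Finset.univ (fun k => 0 < ε k)]
    linarith
  have hM : (G.edgeFinset.card : ℝ) ≤ s * s := by linarith
  calc Real.sqrt (G.edgeFinset.card : ℝ) ≤ Real.sqrt (s * s) := Real.sqrt_le_sqrt hM
    _ = s := Real.sqrt_mul_self hs0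
end

section
/- Let G be a connected finite simple graph on N ≥ 2 vertices, with adjacency matrix A, orthonormal eigenbasis {u_k} with eigenvalues ε_k, and uniform overlaps w_k = (𝟙ᵀu_k)². Then (Σ_{k : ε_k < 0} w_k·|ε_k|) / (Σ_{k : ε_k > 0} ε_k) ≤ N/2 − √(N−1). -/
/-!
Let `λ` be the top eigenvalue, `w_k = (𝟙ᵀu_k)²` and `2m = 𝟙ᵀA𝟙`. Expanding `𝟙` in the eigenbasis
gives `Σ w_k = N` and `Σ ε_k w_k = 2m`. Since `A` is entrywise nonnegative, `|ε_k| ≤ λ` for all `k`,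
so twice the numerator, `Σ w_k (|ε_k| - ε_k)`, is at most `Nλ - 2m`, while the denominator is at
least `λ`; the ratio is therefore at most `N/2 - m/λ`. Finally Hong's bound `λ² ≤ 2m - N + 1`
(Gershgorin's theorem for `A²`, using that no vertex is isolated) gives
`(N - 1) λ² ≤ (N - 1)(2m - N + 1) ≤ m²`, i.e. `m/λ ≥ √(N - 1)`.
-/

open Matrix Finset

section OrthonormalEigenbasis

variable {n : Type*} [Fintype n] [DecidableEq n] {A : Matrix n n ℝ} {u : n → n → ℝ} {ε : n → ℝ}

theorem transpose_mul_self_eq_one_of_orthonormal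
    (horth : ∀ k l, u k ⬝ᵥ u l = if k = l then 1 else 0) : (of u)ᵀ * of u = 1 :=
  mul_eq_one_comm.mp <| by ext k l; rw [mul_apply, one_apply]; exact horth k l

theorem sum_sq_dotProduct_eq_of_orthonormal
    (horth : ∀ k l, u k ⬝ᵥ u l = if k = l then 1 else 0) (y : n → ℝ) :
    ∑ k, (u k ⬝ᵥ y) ^ 2 = y ⬝ᵥ y := by
  calc ∑ k, (u k ⬝ᵥ y) ^ 2 = (of u *ᵥ y) ⬝ᵥ (of u *ᵥ y) := by simp only [dotProduct, sq]; rfl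
    _ = ((of u)ᵀ * of u) *ᵥ y ⬝ᵥ y := by
      rw [dotProduct_mulVec, ← mulVec_transpose, mulVec_mulVec]
    _ = y ⬝ᵥ y := by rw [transpose_mul_self_eq_one_of_orthonormal horth, one_mulVec]

theorem eq_transpose_mul_diagonal_mul_of_orthonormal
    (horth : ∀ k l, u k ⬝ᵥ u l = if k = l then 1 else 0) (heig : ∀ k, A *ᵥ u k = ε k • u k) :
    A = (of u)ᵀ * diagonal ε * of u := by
  have hcomm : A * (of u)ᵀ = (of u)ᵀ * diagonal ε := by
    ext i k
    rw [mul_diagonal]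
    exact (congrFun (heig k) i).trans (mul_comm _ _)
  rw [← hcomm, Matrix.mul_assoc, transpose_mul_self_eq_one_of_orthonormal horth, Matrix.mul_one]

theorem dotProduct_mulVec_eq_sum_of_orthonormal
    (horth : ∀ k l, u k ⬝ᵥ u l = if k = l then 1 else 0) (heig : ∀ k, A *ᵥ u k = ε k • u k)
    (y : n → ℝ) : y ⬝ᵥ A *ᵥ y = ∑ k, ε k * (u k ⬝ᵥ y) ^ 2 := by
  rw [eq_transpose_mul_diagonal_mul_of_orthonormal horth heig, ← mulVec_mulVec, ← mulVec_mulVec,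
    dotProduct_mulVec, vecMul_transpose]
  simp only [dotProduct, mulVec_diagonal, sq]
  refine sum_congr rfl fun k _ => ?_
  rw [show (of u *ᵥ y) k = ∑ i, u k i * y i from rfl]
  ring

theorem dotProduct_mulVec_le_of_orthonormal
    (horth : ∀ k l, u k ⬝ᵥ u l = if k = l then 1 else 0) (heig : ∀ k, A *ᵥ u k = ε k • u k)
    {M : ℝ} (hM : ∀ k, ε k ≤ M) (y : n → ℝ) : y ⬝ᵥ A *ᵥ y ≤ M * (y ⬝ᵥ y) := by
  rw [dotProduct_mulVec_eq_sum_of_orthonormal horth heig,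
    ← sum_sq_dotProduct_eq_of_orthonormal horth, mul_sum]
  gcongr with k
  exact hM k

omit [DecidableEq n] in
theorem abs_dotProduct_mulVec_le (hA : ∀ i j, 0 ≤ A i j) (x : n → ℝ) :
    |x ⬝ᵥ A *ᵥ x| ≤ |x| ⬝ᵥ A *ᵥ |x| := by
  simp only [dotProduct, mulVec, Pi.abs_apply]
  refine (abs_sum_le_sum_abs _ _).trans (sum_le_sum fun i _ => ?_)
  rw [abs_mul]
  gcongr
  refine (abs_sum_le_sum_abs _ _).trans (sum_le_sum fun j _ => ?_)
  rw [abs_mul, abs_of_nonneg (hA i j)]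

theorem neg_le_of_nonneg_of_orthonormal (hA : ∀ i j, 0 ≤ A i j)
    (horth : ∀ k l, u k ⬝ᵥ u l = if k = l then 1 else 0) (heig : ∀ k, A *ᵥ u k = ε k • u k)
    {M : ℝ} (hM : ∀ k, ε k ≤ M) (k : n) : -M ≤ ε k := by
  have hunit : u k ⬝ᵥ u k = 1 := by rw [horth, if_pos rfl]
  have hquad : u k ⬝ᵥ A *ᵥ u k = ε k := by
    rw [heig, dotProduct_smul, hunit, smul_eq_mul, mul_one]
  have habs : |u k| ⬝ᵥ A *ᵥ |u k| ≤ M := by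
    calc |u k| ⬝ᵥ A *ᵥ |u k| ≤ M * (|u k| ⬝ᵥ |u k|) :=
          dotProduct_mulVec_le_of_orthonormal horth heig hM _
      _ = M := by
          rw [show |u k| ⬝ᵥ |u k| = u k ⬝ᵥ u k by simp [dotProduct, abs_mul_abs_self], hunit,
            mul_one]
  have := abs_dotProduct_mulVec_le hA (u k)
  rw [hquad] at this
  linarith [neg_abs_le (ε k)]

end OrthonormalEigenbasis

namespace SimpleGraph

variable {V : Type*} [Fintype V] [DecidableEq V] (G : SimpleGraph V) [DecidableRel G.Adj]

omit [Fintype V] [DecidableEq V] in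
theorem adjMatrix_apply_nonneg {α : Type*} [Zero α] [One α] [Preorder α] [ZeroLEOneClass α]
    (v w : V) : 0 ≤ G.adjMatrix α v w := by
  rw [adjMatrix_apply]
  split_ifs
  exacts [zero_le_one, le_rfl]

theorem sum_degree_neighborFinset_add_card_le (hpos : ∀ v, 0 < G.degree v) (v : V) :
    ∑ w ∈ G.neighborFinset v, G.degree w + Fintype.card V ≤ 2 * #G.edgeFinset + 1 := by
  set s := G.neighborFinset v
  have hv : v ∈ sᶜ := by simp [s]
  have hsplit := sum_add_sum_compl s (fun w => G.degree w)
  rw [sum_degrees_eq_twice_card_edges, ← add_sum_erase _ _ hv] at hsplit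
  have hrest : #(sᶜ.erase v) ≤ ∑ w ∈ sᶜ.erase v, G.degree w := by
    simpa using card_nsmul_le_sum (sᶜ.erase v) (fun w => G.degree w) 1 fun w _ => hpos w
  have hcard := card_compl_add_card s
  have herase := card_erase_add_one hv
  rw [card_neighborFinset_eq_degree] at hcard
  have := hpos v
  omega

/-- Hong's bound. -/
theorem sq_le_of_adjMatrix_mulVec_eq_smul (hpos : ∀ v, 0 < G.degree v) {x : V → ℝ} {μ : ℝ}
    (hx : x ≠ 0) (h : G.adjMatrix ℝ *ᵥ x = μ • x) :
    μ ^ 2 ≤ 2 * #G.edgeFinset - Fintype.card V + 1 := by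
  set A := G.adjMatrix ℝ
  have hsq : Module.End.HasEigenvalue (toLin' (A * A)) (μ ^ 2) := by
    refine Module.End.hasEigenvalue_of_hasEigenvector ⟨?_, hx⟩
    rw [Module.End.mem_eigenspace_iff, toLin'_apply, ← mulVec_mulVec, h, mulVec_smul, h, smul_smul,
      sq]
  obtain ⟨k, hk⟩ := eigenvalue_mem_ball hsq
  have hrow : ∑ j, (A * A) k j = ∑ w ∈ G.neighborFinset k, (G.degree w : ℝ) := by
    have : ∑ j, (A * A) k j = ((A * A) *ᵥ 1) k := by simp [mulVec, dotProduct]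
    rw [this, ← mulVec_mulVec]
    simp [A]
  have hle : μ ^ 2 ≤ ∑ j, (A * A) k j := by
    rw [Metric.mem_closedBall, Real.dist_eq] at hk
    have hnonneg : ∀ j, 0 ≤ (A * A) k j := fun j =>
      sum_nonneg fun l _ => mul_nonneg (G.adjMatrix_apply_nonneg _ _) (G.adjMatrix_apply_nonneg _ _)
    simp only [Real.norm_eq_abs, abs_of_nonneg (hnonneg _)] at hk
    rw [← add_sum_erase _ _ (mem_univ k)]
    linarith [le_abs_self (μ ^ 2 - (A * A) k k)]
  have hdeg : (∑ w ∈ G.neighborFinset k, (G.degree w : ℝ)) + Fintype.card V ≤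
      2 * #G.edgeFinset + 1 := by exact_mod_cast G.sum_degree_neighborFinset_add_card_le hpos k
  linarith

end SimpleGraph

theorem two_mul_sum_filter_neg_le {ι : Type*} [Fintype ι] {w ε : ι → ℝ} {M : ℝ}
    (hw : ∀ k, 0 ≤ w k) (hε : ∀ k, |ε k| ≤ M) :
    2 * ∑ k ∈ univ.filter (fun k => ε k < 0), w k * |ε k| ≤ M * ∑ k, w k - ∑ k, ε k * w k := by
  have hsplit : 2 * ∑ k ∈ univ.filter (fun k => ε k < 0), w k * |ε k| =
      ∑ k, w k * (|ε k| - ε k) := by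
    rw [mul_sum, sum_filter]
    refine sum_congr rfl fun k _ => ?_
    split_ifs with h
    · rw [abs_of_neg h]; ring
    · rw [abs_of_nonneg (not_lt.mp h)]; ring
  rw [hsplit, mul_sum, ← sum_sub_distrib]
  gcongr with k
  nlinarith [hw k, hε k]

theorem div_le_half_sub_sqrt {n M T a b : ℝ} (hn : 1 ≤ n) (hM : 0 < M) (hMT : M ^ 2 ≤ T - n + 1)
    (ha : 0 ≤ a) (haT : 2 * a ≤ n * M - T) (hb : M ≤ b) : a / b ≤ n / 2 - √(n - 1) := by
  have hT : 0 ≤ T := by nlinarith [sq_nonneg M]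
  have hsqrt : √(n - 1) ≤ T / (2 * M) := by
    refine Real.sqrt_le_iff.mpr ⟨by positivity, ?_⟩
    rw [div_pow, le_div_iff₀ (by positivity)]
    -- `(T/2)² - (n - 1)(T - n + 1) = (T/2 - (n - 1))²`
    nlinarith [sq_nonneg (T - 2 * (n - 1)), mul_le_mul_of_nonneg_left hMT (by linarith : 0 ≤ n - 1)]
  calc a / b ≤ a / M := div_le_div_of_nonneg_left ha hM hb
    _ ≤ (n * M - T) / 2 / M := by gcongr; linarith
    _ = n / 2 - T / (2 * M) := by field_simp
    _ ≤ n / 2 - √(n - 1) := by linarith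

/-- For a connected finite simple graph `G` on `N ≥ 2` vertices, with
adjacency matrix `A = G.adjMatrix ℝ`, orthonormal eigenbasis `u k` with eigenvalues
`ε k` and uniform overlaps `w k = (𝟙ᵀ u k)²`, the ratio
`(Σ_{ε_k<0} w_k |ε_k|) / (Σ_{ε_k>0} ε_k)` is at most `N/2 - √(N-1)`. -/
theorem stmt_5 {N : ℕ} (hN : 2 ≤ N) (G : SimpleGraph (Fin N)) [DecidableRel G.Adj]
    (hconn : G.Connected)
    (u : Fin N → Fin N → ℝ) (ε : Fin N → ℝ)
    (horth : ∀ k l, (∑ i, u k i * u l i) = if k = l then (1 : ℝ) else 0)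
    (heig : ∀ k, (G.adjMatrix ℝ).mulVec (u k) = ε k • u k) :
    (∑ k ∈ Finset.univ.filter (fun k => ε k < 0), (∑ i, u k i) ^ 2 * |ε k|) /
        (∑ k ∈ Finset.univ.filter (fun k => 0 < ε k), ε k) ≤
      (N : ℝ) / 2 - Real.sqrt ((N : ℝ) - 1) := by
  have : Nontrivial (Fin N) := Fin.nontrivial_iff_two_le.mpr hN
  have hpos (v) : 0 < G.degree v := hconn.preconnected.degree_pos_of_nontrivial v
  obtain ⟨k₀, -, hmax⟩ := exists_max_image univ ε univ_nonempty
  have hle (k) : ε k ≤ ε k₀ := hmax k (mem_univ k)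
  have hw : ∑ k, (∑ i, u k i) ^ 2 = N := by
    simpa [dotProduct_one] using sum_sq_dotProduct_eq_of_orthonormal horth 1
  have hT : ∑ k, ε k * (∑ i, u k i) ^ 2 = 2 * #G.edgeFinset := by
    have := dotProduct_mulVec_eq_sum_of_orthonormal horth heig 1
    rw [dotProduct_comm, ← G.natCast_card_dart_eq_dotProduct, G.dart_card_eq_twice_card_edges]
      at this
    simpa [dotProduct_one] using this.symm
  have hM : 0 < ε k₀ := by
    have hE : (0 : ℝ) < 2 * #G.edgeFinset := by
      exact_mod_cast G.sum_degrees_eq_twice_card_edges ▸ sum_pos (fun v _ => hpos v) univ_nonempty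
    by_contra! h
    have : ∑ k, ε k * (∑ i, u k i) ^ 2 ≤ 0 :=
      sum_nonpos fun k _ => mul_nonpos_of_nonpos_of_nonneg ((hle k).trans h) (sq_nonneg _)
    linarith
  have habs (k) : |ε k| ≤ ε k₀ :=
    abs_le.mpr ⟨neg_le_of_nonneg_of_orthonormal G.adjMatrix_apply_nonneg horth heig hle k, hle k⟩
  refine div_le_half_sub_sqrt (T := 2 * #G.edgeFinset) (by exact_mod_cast one_le_two.trans hN)
    hM ?_ (sum_nonneg fun k _ => by positivity) ?_
    (single_le_sum (fun k hk => (mem_filter.mp hk).2.le) (mem_filter.mpr ⟨mem_univ k₀, hM⟩))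
  · have hu : u k₀ ≠ 0 := fun h => by simpa [h] using horth k₀ k₀
    simpa using G.sq_le_of_adjMatrix_mulVec_eq_smul hpos hu (heig k₀)
  · simpa [hw, hT, mul_comm] using
      two_mul_sum_filter_neg_le (fun k => sq_nonneg (∑ i, u k i)) habs
end

section
/- Let S_N be the star graph on N ≥ 2 vertices, with adjacency matrix A, orthonormal eigenbasis {u_k} with eigenvalues ε_k, and uniform overlaps w_k = (𝟙ᵀu_k)². Then (Σ_{k : ε_k < 0} w_k·|ε_k|) / (Σ_{k : ε_k > 0} ε_k) = N/2 − √(N−1), i.e. the star saturates the upper bound N/2 − √(N−1) valid for all connected graphs on N vertices. -/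
/-!
An eigenvector `v` of the star with eigenvalue `e ≠ 0` is pinned down by its hub entry: every
leaf carries `v₀ / e`, and the hub equation `e v₀ = Σ_leaves v` then forces `e² = N - 1`,
`‖v‖² = 2 v₀²` and `𝟙ᵀ v = v₀ (1 + e)`. Hence every nonzero eigenvalue is `±√(N - 1)`, and
comparing `Σ ε_k = tr A = 0` with `Σ ε_k² = tr A² = 2 (N - 1)` shows that each sign occurs
exactly once. The ratio is then `(1 - √(N - 1))² / 2 = N / 2 - √(N - 1)`.
-/

/-- The star graph on `Fin N`: the hub is the vertex `0` (i.e. the vertex with value `0`),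
adjacent to every other vertex, and there are no other edges. -/
def starGraph (N : ℕ) : SimpleGraph (Fin N) where
  Adj i j := i ≠ j ∧ ((i : ℕ) = 0 ∨ (j : ℕ) = 0)
  symm := by
    constructor
    intro i j h
    exact ⟨h.1.symm, h.2.symm⟩
  loopless := by
    constructor
    intro i h
    exact h.1 rfl

instance starGraphDecidableAdj (N : ℕ) : DecidableRel (starGraph N).Adj := fun i j =>
  inferInstanceAs (Decidable (i ≠ j ∧ ((i : ℕ) = 0 ∨ (j : ℕ) = 0)))

open Finset Matrix

section OrthonormalEigenbasis

variable {n R : Type*} [Fintype n] [DecidableEq n] [CommRing R] {B : Matrix n n R}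
  {u : n → n → R} {c : n → R}

theorem trace_eq_sum_of_orthonormal_eigenvectors
    (horth : ∀ k l, u k ⬝ᵥ u l = if k = l then 1 else 0)
    (heig : ∀ k, B *ᵥ u k = c k • u k) :
    B.trace = ∑ k, c k := by
  set U : Matrix n n R := Matrix.of u
  have hU : Uᵀ * U = 1 := mul_eq_one_comm.mp <| by
    ext k l
    exact horth k l
  calc B.trace = (U * (B * Uᵀ)).trace := by
        rw [trace_mul_comm, Matrix.mul_assoc, hU, Matrix.mul_one]
    _ = ∑ k, u k ⬝ᵥ (B *ᵥ u k) := rfl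
    _ = ∑ k, c k := by simp [heig, horth]

theorem trace_mul_self_eq_sum_sq_of_orthonormal_eigenvectors
    (horth : ∀ k l, u k ⬝ᵥ u l = if k = l then 1 else 0)
    (heig : ∀ k, B *ᵥ u k = c k • u k) :
    (B * B).trace = ∑ k, c k ^ 2 :=
  trace_eq_sum_of_orthonormal_eigenvectors horth fun k => by
    rw [← mulVec_mulVec, heig, mulVec_smul, heig, smul_smul, sq]

end OrthonormalEigenbasis

theorem card_filter_pos_eq_one_and_card_filter_neg_eq_one {ι : Type*} [Fintype ι]
    {ε : ι → ℝ} {r : ℝ} (hr : r ≠ 0) (hε : ∀ k, ε k ≠ 0 → |ε k| = r)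
    (hsum : ∑ k, ε k = 0) (hsq : ∑ k, ε k ^ 2 = 2 * r ^ 2) :
    #{k | 0 < ε k} = 1 ∧ #{k | ε k < 0} = 1 := by
  have hsign : ∀ k, ε k = r * (if 0 < ε k then 1 else 0) - r * (if ε k < 0 then 1 else 0) ∧
      ε k ^ 2 = r ^ 2 * ((if 0 < ε k then 1 else 0) + (if ε k < 0 then 1 else 0)) := by
    intro k
    rcases lt_trichotomy (ε k) 0 with hk | hk | hk
    · have : ε k = -r := by rw [← hε k hk.ne, abs_of_neg hk, neg_neg]
      rw [if_neg hk.not_gt, if_pos hk, this]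
      constructor <;> ring
    · simp [hk]
    · have : ε k = r := by rw [← hε k hk.ne', abs_of_pos hk]
      rw [if_pos hk, if_neg hk.not_gt, this]
      constructor <;> ring
  rw [sum_congr rfl fun k _ => (hsign k).1, sum_sub_distrib, ← mul_sum, ← mul_sum,
    sum_boole, sum_boole] at hsum
  rw [sum_congr rfl fun k _ => (hsign k).2, ← mul_sum, sum_add_distrib, sum_boole,
    sum_boole] at hsq
  have hbalance : (#{k | 0 < ε k} : ℝ) = #{k | ε k < 0} :=
    mul_left_cancel₀ hr (by linear_combination hsum)
  have htotal : (#{k | 0 < ε k} : ℝ) + #{k | ε k < 0} = 2 :=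
    mul_left_cancel₀ (pow_ne_zero 2 hr) (by linear_combination hsq)
  have hP : (#{k | 0 < ε k} : ℝ) = 1 := by linarith
  have hQ : (#{k | ε k < 0} : ℝ) = 1 := by linarith
  exact ⟨by exact_mod_cast hP, by exact_mod_cast hQ⟩

section StarGraph

variable {R : Type*} [CommRing R] {N : ℕ} [NeZero N]

lemma starGraph_adj_zero_iff {j : Fin N} : (starGraph N).Adj 0 j ↔ j ≠ 0 :=
  ⟨fun h => h.1.symm, fun h => ⟨h.symm, .inl (Fin.val_zero N)⟩⟩

lemma starGraph_adj_iff_of_ne_zero {i j : Fin N} (hi : i ≠ 0) :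
    (starGraph N).Adj i j ↔ j = 0 :=
  ⟨fun h => Fin.ext (h.2.resolve_left fun h0 => hi (Fin.ext h0)),
    fun h => ⟨h ▸ hi, .inr (h ▸ Fin.val_zero N)⟩⟩

lemma starGraph_degree_zero : (starGraph N).degree 0 = N - 1 := by
  rw [← SimpleGraph.card_neighborFinset_eq_degree, SimpleGraph.neighborFinset_eq_filter]
  simp only [starGraph_adj_zero_iff, filter_ne', card_erase_of_mem (mem_univ _), card_univ,
    Fintype.card_fin]

lemma starGraph_degree_of_ne_zero {i : Fin N} (hi : i ≠ 0) : (starGraph N).degree i = 1 := by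
  rw [← SimpleGraph.card_neighborFinset_eq_degree, SimpleGraph.neighborFinset_eq_filter]
  simp [starGraph_adj_iff_of_ne_zero hi, filter_eq']

lemma Fin.cast_card_compl_zero : (#({0}ᶜ : Finset (Fin N)) : R) = N - 1 := by
  simp [card_compl, Nat.cast_pred (Nat.pos_of_neZero N)]

lemma starGraph_trace_adjMatrix_mul_self :
    ((starGraph N).adjMatrix R * (starGraph N).adjMatrix R).trace = 2 * ((N : R) - 1) := by
  have hleaf : ∀ i ∈ ({0}ᶜ : Finset (Fin N)), ((starGraph N).degree i : R) = 1 :=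
    fun i hi => by rw [starGraph_degree_of_ne_zero (by simpa using hi), Nat.cast_one]
  simp only [trace, Matrix.diag, SimpleGraph.adjMatrix_mul_self_apply_self]
  rw [Fintype.sum_eq_add_sum_compl 0, sum_congr rfl hleaf, starGraph_degree_zero,
    Nat.cast_pred (Nat.pos_of_neZero N), sum_const, nsmul_eq_mul, mul_one,
    Fin.cast_card_compl_zero]
  ring

lemma starGraph_adjMatrix_mulVec_apply_zero (v : Fin N → R) :
    ((starGraph N).adjMatrix R *ᵥ v) 0 = ∑ j ∈ {0}ᶜ, v j := by
  simp [mulVec, dotProduct, SimpleGraph.adjMatrix_apply, starGraph_adj_zero_iff, sum_ite,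
    filter_ne', compl_eq_univ_sdiff, sdiff_singleton_eq_erase]

lemma starGraph_adjMatrix_mulVec_apply_of_ne_zero (v : Fin N → R) {i : Fin N} (hi : i ≠ 0) :
    ((starGraph N).adjMatrix R *ᵥ v) i = v 0 := by
  simp [mulVec, dotProduct, SimpleGraph.adjMatrix_apply, starGraph_adj_iff_of_ne_zero hi]

variable {v : Fin N → R} {e : R}

lemma starGraph_eigenvector_apply_of_ne_zero (hv : (starGraph N).adjMatrix R *ᵥ v = e • v)
    {i : Fin N} (hi : i ≠ 0) : e * v i = v 0 := by
  simpa [starGraph_adjMatrix_mulVec_apply_of_ne_zero v hi] using (congrFun hv i).symm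

lemma starGraph_eigenvector_sum_compl_zero (hv : (starGraph N).adjMatrix R *ᵥ v = e • v) :
    ∑ j ∈ {0}ᶜ, v j = e * v 0 := by
  simpa [starGraph_adjMatrix_mulVec_apply_zero v] using congrFun hv 0

lemma starGraph_eigenvector_sum (hv : (starGraph N).adjMatrix R *ᵥ v = e • v) :
    ∑ j, v j = v 0 * (1 + e) := by
  rw [Fintype.sum_eq_add_sum_compl 0, starGraph_eigenvector_sum_compl_zero hv]
  ring

lemma starGraph_eigenvector_apply_zero_ne_zero [IsDomain R]
    (hv : (starGraph N).adjMatrix R *ᵥ v = e • v) (he : e ≠ 0) (hv0 : v ≠ 0) :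
    v 0 ≠ 0 := by
  refine fun h0 => hv0 (funext fun i => ?_)
  by_cases hi : i = 0
  · rw [hi, h0, Pi.zero_apply]
  · simpa [h0, he] using starGraph_eigenvector_apply_of_ne_zero hv hi

lemma starGraph_eigenvalue_sq [IsDomain R] (hv : (starGraph N).adjMatrix R *ᵥ v = e • v)
    (h0 : v 0 ≠ 0) : e ^ 2 = N - 1 := by
  have h : e * (e * v 0) = (N - 1) * v 0 := by
    rw [← starGraph_eigenvector_sum_compl_zero hv, mul_sum,
      sum_congr rfl fun i hi => starGraph_eigenvector_apply_of_ne_zero hv (by simpa using hi),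
      sum_const, nsmul_eq_mul, Fin.cast_card_compl_zero]
  exact mul_right_cancel₀ h0 (by linear_combination h)

lemma starGraph_eigenvector_dotProduct_self [IsDomain R]
    (hv : (starGraph N).adjMatrix R *ᵥ v = e • v) (he : e ≠ 0) (h0 : v 0 ≠ 0) :
    v ⬝ᵥ v = 2 * v 0 ^ 2 := by
  have hleaves : ∑ j ∈ {0}ᶜ, v j * v j = v 0 ^ 2 := by
    refine mul_left_cancel₀ (pow_ne_zero 2 he) ?_
    rw [mul_sum, sum_congr rfl fun i hi => show e ^ 2 * (v i * v i) = v 0 ^ 2 by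
      rw [← starGraph_eigenvector_apply_of_ne_zero hv (by simpa using hi)]; ring,
      sum_const, nsmul_eq_mul, Fin.cast_card_compl_zero, starGraph_eigenvalue_sq hv h0]
  rw [dotProduct, Fintype.sum_eq_add_sum_compl 0, hleaves]
  ring

variable [IsDomain R]

lemma starGraph_eigenvalue_sq_of_dotProduct_self_eq_one
    (hv : (starGraph N).adjMatrix R *ᵥ v = e • v) (he : e ≠ 0) (hunit : v ⬝ᵥ v = 1) :
    e ^ 2 = N - 1 :=
  starGraph_eigenvalue_sq hv <| starGraph_eigenvector_apply_zero_ne_zero hv he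
    fun h => one_ne_zero (hunit.symm.trans (by simp [h]))

lemma starGraph_two_mul_sum_sq_of_dotProduct_self_eq_one
    (hv : (starGraph N).adjMatrix R *ᵥ v = e • v) (he : e ≠ 0) (hunit : v ⬝ᵥ v = 1) :
    2 * (∑ j, v j) ^ 2 = (1 + e) ^ 2 := by
  have h0 := starGraph_eigenvector_apply_zero_ne_zero hv he
    fun h => one_ne_zero (hunit.symm.trans (by simp [h]))
  have hnorm := starGraph_eigenvector_dotProduct_self hv he h0
  rw [hunit] at hnorm
  rw [starGraph_eigenvector_sum hv]
  linear_combination -(1 + e) ^ 2 * hnorm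

end StarGraph

/-- For the star graph `S_N` on `N ≥ 2` vertices, with adjacency matrix
`A`, orthonormal eigenbasis `u k` with eigenvalues `ε k` and uniform overlaps
`w k = (𝟙ᵀ u k)²`, the ratio `(Σ_{ε_k<0} w_k |ε_k|) / (Σ_{ε_k>0} ε_k)` equals
`N/2 - √(N-1)`, saturating the bound valid for all connected graphs on `N` vertices. -/
theorem stmt_6 {N : ℕ} (hN : 2 ≤ N)
    (u : Fin N → Fin N → ℝ) (ε : Fin N → ℝ)
    (horth : ∀ k l, (∑ i, u k i * u l i) = if k = l then (1 : ℝ) else 0)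
    (heig : ∀ k, ((starGraph N).adjMatrix ℝ).mulVec (u k) = ε k • u k) :
    (∑ k ∈ Finset.univ.filter (fun k => ε k < 0), (∑ i, u k i) ^ 2 * |ε k|) /
        (∑ k ∈ Finset.univ.filter (fun k => 0 < ε k), ε k) =
      (N : ℝ) / 2 - Real.sqrt ((N : ℝ) - 1) := by
  have : NeZero N := ⟨by omega⟩
  have hN' : (2 : ℝ) ≤ N := by exact_mod_cast hN
  have hr2 : √((N : ℝ) - 1) ^ 2 = N - 1 := Real.sq_sqrt (by linarith)
  have hr : 0 < √((N : ℝ) - 1) := Real.sqrt_pos.mpr (by linarith)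
  set r := √((N : ℝ) - 1)
  have hunit : ∀ k, u k ⬝ᵥ u k = 1 := fun k => (horth k k).trans (if_pos rfl)
  have habs : ∀ k, ε k ≠ 0 → |ε k| = r := fun k hk => by
    rw [← abs_of_pos hr, ← sq_eq_sq_iff_abs_eq_abs, hr2,
      starGraph_eigenvalue_sq_of_dotProduct_self_eq_one (heig k) hk (hunit k)]
  obtain ⟨hP, hQ⟩ := card_filter_pos_eq_one_and_card_filter_neg_eq_one hr.ne' habs
    (by rw [← trace_eq_sum_of_orthonormal_eigenvectors horth heig, SimpleGraph.trace_adjMatrix])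
    (by rw [← trace_mul_self_eq_sum_sq_of_orthonormal_eigenvectors horth heig,
      starGraph_trace_adjMatrix_mul_self, hr2])
  have hpos : ∀ k ∈ Finset.univ.filter (fun k => 0 < ε k), ε k = r := fun k hk => by
    have hk := (mem_filter.mp hk).2
    rw [← habs k hk.ne', abs_of_pos hk]
  have hneg : ∀ k ∈ Finset.univ.filter (fun k => ε k < 0),
      (∑ i, u k i) ^ 2 * |ε k| = (1 - r) ^ 2 / 2 * r := fun k hk => by
    have hk := (mem_filter.mp hk).2
    have hεk : ε k = -r := by rw [← habs k hk.ne, abs_of_neg hk, neg_neg]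
    have hoverlap := starGraph_two_mul_sum_sq_of_dotProduct_self_eq_one (heig k) hk.ne (hunit k)
    rw [hεk, ← sub_eq_add_neg] at hoverlap
    rw [habs k hk.ne]
    linear_combination r / 2 * hoverlap
  rw [sum_congr rfl hneg, sum_congr rfl hpos, sum_const, sum_const, hP, hQ,
    one_smul, one_smul, div_eq_iff hr.ne']
  linear_combination r / 2 * hr2
end

section
/- Let G be a finite simple graph on N vertices with degrees d_1, …, d_N and average degree d̄ = (1/N)·Σ_i d_i > 0. Then every unit eigenvector u of the adjacency matrix A with eigenvalue ε < 0 satisfies (𝟙ᵀu)² ≤ (Σ_{i=1}^N (d_i − d̄)²)/d̄² = N·δ_rms², where δ_rms = ((1/N)·Σ_i (d_i − d̄)²)^{1/2}/d̄. -/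
/-!
Summing the eigenvalue equation `A u = λ u` over all vertices gives `Σ dᵢ uᵢ = λ Σ uᵢ`, hence
`(λ - d̄) Σ uᵢ = Σ (dᵢ - d̄) uᵢ`. Since `λ < 0 < d̄`, the factor satisfies `|λ - d̄| ≥ d̄`, and
Cauchy–Schwarz with `Σ uᵢ² = 1` bounds the right-hand side by `(Σ (dᵢ - d̄)²)^{1/2}`.
-/

open Finset Matrix

theorem SimpleGraph.sum_degree_mul_eq_sum_adjMatrix_mulVec {V R : Type*} [Fintype V]
    [NonAssocSemiring R] (G : SimpleGraph V) [DecidableRel G.Adj] (u : V → R) :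
    ∑ v, (G.degree v : R) * u v = ∑ v, (G.adjMatrix R *ᵥ u) v := by
  simp only [mulVec, dotProduct]
  rw [sum_comm]
  refine sum_congr rfl fun w _ => ?_
  rw [← sum_mul, ← mul_one (G.degree w : R), ← adjMatrix_mulVec_const_apply]
  simp only [mulVec, dotProduct, Function.const_apply, mul_one, G.adjMatrix_apply, G.adj_comm]

theorem sq_mul_sq_sum_le_of_sum_mul_eq {ι : Type*} (s : Finset ι) (d u : ι → ℝ) {c μ : ℝ}
    (hμ : μ ≤ 0) (hc : 0 ≤ c) (h : ∑ i ∈ s, d i * u i = μ * ∑ i ∈ s, u i) :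
    c ^ 2 * (∑ i ∈ s, u i) ^ 2 ≤ (∑ i ∈ s, (d i - c) ^ 2) * ∑ i ∈ s, u i ^ 2 := by
  have hshift : (μ - c) * ∑ i ∈ s, u i = ∑ i ∈ s, (d i - c) * u i := by
    simp only [sub_mul, sum_sub_distrib, h, mul_sum]
  calc c ^ 2 * (∑ i ∈ s, u i) ^ 2 ≤ ((μ - c) * ∑ i ∈ s, u i) ^ 2 := by
        rw [mul_pow]; exact mul_le_mul_of_nonneg_right (by nlinarith) (sq_nonneg _)
    _ ≤ _ := hshift ▸ sum_mul_sq_le_sq_mul_sq s _ _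

theorem sum_sq_div_sq_eq_card_mul_sq_sqrt_mean {ι : Type*} [Fintype ι] (f : ι → ℝ) (d : ℝ) :
    (∑ i, f i ^ 2) / d ^ 2 = Fintype.card ι * (√(1 / Fintype.card ι * ∑ i, f i ^ 2) / d) ^ 2 := by
  cases isEmpty_or_nonempty ι
  · simp
  rw [div_pow, Real.sq_sqrt (by positivity)]
  field_simp

theorem stmt_8_general {N : ℕ} (G : SimpleGraph (Fin N)) [DecidableRel G.Adj]
    (dbar : ℝ) (hdbar_pos : 0 < dbar)
    (δrms : ℝ)
    (hδ : δrms = Real.sqrt ((1 / (N : ℝ)) * ∑ i, ((G.degree i : ℝ) - dbar) ^ 2) / dbar)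
    (u : Fin N → ℝ) (lam : ℝ)
    (hunit : ∑ i, (u i) ^ 2 = 1)
    (heig : (G.adjMatrix ℝ).mulVec u = lam • u)
    (hneg : lam < 0) :
    (∑ i, u i) ^ 2 ≤ (∑ i, ((G.degree i : ℝ) - dbar) ^ 2) / dbar ^ 2 ∧
      (∑ i, ((G.degree i : ℝ) - dbar) ^ 2) / dbar ^ 2 = (N : ℝ) * δrms ^ 2 := by
  refine ⟨?_, ?_⟩
  · have hdeg : ∑ i, (G.degree i : ℝ) * u i = lam * ∑ i, u i := by
      rw [G.sum_degree_mul_eq_sum_adjMatrix_mulVec, heig]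
      simp only [Pi.smul_apply, smul_eq_mul, mul_sum]
    have hbound := sq_mul_sq_sum_le_of_sum_mul_eq univ _ u hneg.le hdbar_pos.le hdeg
    rw [hunit, mul_one] at hbound
    rw [le_div_iff₀ (by positivity)]
    linarith
  · simpa [hδ] using sum_sq_div_sq_eq_card_mul_sq_sqrt_mean (fun i ↦ (G.degree i : ℝ) - dbar) dbar

/-- Degree-variance control of the negative-mode uniform overlap: for a
finite simple graph `G` with degrees `d i`, positive average degree `d̄`, every unit
eigenvector `u` of the adjacency matrix with negative eigenvalue satisfies
`(𝟙ᵀ u)² ≤ (Σ_i (d_i - d̄)²)/d̄² = N δ_rms²`, where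
`δ_rms = ((1/N) Σ_i (d_i - d̄)²)^{1/2} / d̄`. -/
theorem stmt_8 {N : ℕ} (G : SimpleGraph (Fin N)) [DecidableRel G.Adj]
    (dbar : ℝ) (hdbar : dbar = (∑ i, (G.degree i : ℝ)) / N) (hdbar_pos : 0 < dbar)
    (δrms : ℝ)
    (hδ : δrms = Real.sqrt ((1 / (N : ℝ)) * ∑ i, ((G.degree i : ℝ) - dbar) ^ 2) / dbar)
    (u : Fin N → ℝ) (lam : ℝ)
    (hunit : ∑ i, (u i) ^ 2 = 1)
    (heig : (G.adjMatrix ℝ).mulVec u = lam • u)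
    (hneg : lam < 0) :
    (∑ i, u i) ^ 2 ≤ (∑ i, ((G.degree i : ℝ) - dbar) ^ 2) / dbar ^ 2 ∧
      (∑ i, ((G.degree i : ℝ) - dbar) ^ 2) / dbar ^ 2 = (N : ℝ) * δrms ^ 2 :=
  stmt_8_general G dbar hdbar_pos δrms hδ u lam hunit heig hneg
end

section
/- Fix 0 < δ₀ < 1/√2 and ε > 0. There exists N₀ such that for every N ≥ N₀ and every finite simple graph G on N vertices with positive average degree d̄ and relative rms degree fluctuation δ_rms ≤ δ₀, every unit eigenvector u of the adjacency matrix of G with negative eigenvalue satisfies (𝟙ᵀu)² ≤ (2·δ₀² + ε)·(N/2 − √(N−1)); here N/2 − √(N−1) is the uniform overlap of the negative eigenmode of the star graph on N vertices. -/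
/-!
Summing the eigenvalue equation `A u = λ u` against `𝟙` gives `dᵀu = λ 𝟙ᵀu`, hence
`(d - d̄𝟙)ᵀu = (λ - d̄) 𝟙ᵀu`. For `λ < 0` we have `|λ - d̄| ≥ d̄`, so Cauchy–Schwarz yields
`d̄² (𝟙ᵀu)² ≤ ‖d - d̄𝟙‖² = N δ_rms² d̄²`, i.e. `(𝟙ᵀu)² ≤ δ₀² N`. Finally
`δ₀² N ≤ (2δ₀² + ε)(N/2 - √(N-1))` as soon as `(2δ₀² + ε) √(N-1) ≤ ε N / 2`, which holds for large `N`.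
-/

open Finset Matrix

namespace SimpleGraph

variable {V : Type*} [Fintype V] (G : SimpleGraph V) [DecidableRel G.Adj]

theorem sum_degree_mul_eq_of_mulVec_eq_smul {α : Type*} [CommSemiring α] {u : V → α} {lam : α}
    (hu : G.adjMatrix α *ᵥ u = lam • u) :
    ∑ i, (G.degree i : α) * u i = lam * ∑ i, u i := by
  have hdeg : (1 : V → α) ᵥ* G.adjMatrix α = fun i ↦ (G.degree i : α) := by
    ext i; simp
  calc ∑ i, (G.degree i : α) * u i = (1 ᵥ* G.adjMatrix α) ⬝ᵥ u := by rw [hdeg]; rfl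
    _ = 1 ⬝ᵥ (G.adjMatrix α *ᵥ u) := (dotProduct_mulVec _ _ _).symm
    _ = lam * ∑ i, u i := by rw [hu, dotProduct_smul, one_dotProduct, smul_eq_mul]

theorem sq_mul_sq_sum_le_of_mulVec_eq_smul {u : V → ℝ} {lam c : ℝ}
    (hu : G.adjMatrix ℝ *ᵥ u = lam • u) (hlam : lam ≤ 0) (hc : 0 ≤ c) :
    c ^ 2 * (∑ i, u i) ^ 2 ≤ (∑ i, ((G.degree i : ℝ) - c) ^ 2) * ∑ i, u i ^ 2 := by
  have hcentered : ∑ i, ((G.degree i : ℝ) - c) * u i = (lam - c) * ∑ i, u i := by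
    simp only [sub_mul, sum_sub_distrib, G.sum_degree_mul_eq_of_mulVec_eq_smul hu, ← mul_sum]
  calc c ^ 2 * (∑ i, u i) ^ 2 ≤ ((lam - c) * ∑ i, u i) ^ 2 := by
        nlinarith [mul_nonneg (mul_nonneg_of_nonpos_of_nonpos hlam (by linarith : lam - 2 * c ≤ 0))
          (sq_nonneg (∑ i, u i))]
    _ ≤ _ := hcentered ▸ sum_mul_sq_le_sq_mul_sq _ _ _

end SimpleGraph

theorem sum_sq_le_of_sqrt_div_le {N d D δ : ℝ} (hN : 0 < N) (hd : 0 < d)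
    (h : √(1 / N * D) / d ≤ δ) : D ≤ N * (δ * d) ^ 2 := by
  rw [div_le_iff₀ hd, Real.sqrt_le_iff, one_div_mul_eq_div, div_le_iff₀' hN] at h
  exact h.2

theorem mul_sqrt_sub_one_le {C ε x : ℝ} (hC : 0 ≤ C) (hε : 0 < ε) (hx : (2 * C / ε) ^ 2 ≤ x) :
    C * √(x - 1) ≤ ε * x / 2 := by
  have hsqrt : 2 * C / ε ≤ √x := Real.le_sqrt_of_sq_le hx
  rw [div_le_iff₀ hε] at hsqrt
  have hx0 : 0 ≤ x := le_trans (sq_nonneg _) hx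
  calc C * √(x - 1) ≤ C * √x := by gcongr; linarith
    _ ≤ ε / 2 * √x * √x := by gcongr; linarith
    _ = ε * x / 2 := by rw [mul_assoc, Real.mul_self_sqrt hx0]; ring

theorem exists_forall_mul_le_mul_half_sub_sqrt {a ε : ℝ} (ha : 0 ≤ a) (hε : 0 < ε) :
    ∃ N₀ : ℕ, ∀ N : ℕ, N₀ ≤ N → a * N ≤ (2 * a + ε) * ((N : ℝ) / 2 - √((N : ℝ) - 1)) := by
  refine ⟨⌈(2 * (2 * a + ε) / ε) ^ 2⌉₊, fun N hN ↦ ?_⟩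
  have := mul_sqrt_sub_one_le (by positivity) hε (Nat.ceil_le.1 hN)
  linarith

theorem stmt_9_general (δ₀ ε : ℝ) (hε : 0 < ε) :
    ∃ N₀ : ℕ, ∀ N : ℕ, N₀ ≤ N →
      ∀ (G : SimpleGraph (Fin N)) [DecidableRel G.Adj],
        ∀ dbar δrms : ℝ,
          dbar = (∑ i, (G.degree i : ℝ)) / N → 0 < dbar →
          δrms = Real.sqrt ((1 / (N : ℝ)) * ∑ i, ((G.degree i : ℝ) - dbar) ^ 2) / dbar →
          δrms ≤ δ₀ →
          ∀ (u : Fin N → ℝ) (lam : ℝ),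
            (∑ i, (u i) ^ 2 = 1) → (G.adjMatrix ℝ).mulVec u = lam • u → lam < 0 →
            (∑ i, u i) ^ 2 ≤ (2 * δ₀ ^ 2 + ε) * ((N : ℝ) / 2 - Real.sqrt ((N : ℝ) - 1)) := by
  obtain ⟨N₀, hN₀⟩ := exists_forall_mul_le_mul_half_sub_sqrt (sq_nonneg δ₀) hε
  refine ⟨N₀, fun N hN G _ dbar δrms hdbar hdpos hδrms hδle u lam hunit hu hlam ↦ ?_⟩
  have hNpos : (0 : ℝ) < N := by
    rcases N.eq_zero_or_pos with rfl | hN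
    · simp [hdbar] at hdpos
    · exact_mod_cast hN
  have hvariance := sum_sq_le_of_sqrt_div_le hNpos hdpos (hδrms ▸ hδle)
  have hoverlap := G.sq_mul_sq_sum_le_of_mulVec_eq_smul hu hlam.le hdpos.le
  rw [hunit, mul_one] at hoverlap
  have hsq : dbar ^ 2 * (∑ i, u i) ^ 2 ≤ dbar ^ 2 * (δ₀ ^ 2 * N) :=
    hoverlap.trans (hvariance.trans_eq (by ring))
  exact (le_of_mul_le_mul_left hsq (by positivity)).trans (hN₀ N hN)

/-- Fix `0 < δ₀ < 1/√2` and `ε > 0`. There exists `N₀` such that for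
every `N ≥ N₀` and every finite simple graph `G` on `N` vertices with positive average
degree `d̄` and relative rms degree fluctuation `δ_rms ≤ δ₀`, every unit eigenvector of
the adjacency matrix of `G` with negative eigenvalue satisfies
`(𝟙ᵀ u)² ≤ (2 δ₀² + ε) (N/2 - √(N-1))`, the right factor being the uniform overlap of
the negative eigenmode of the star graph on `N` vertices. -/
theorem stmt_9 (δ₀ ε : ℝ) (hδ₀ : 0 < δ₀) (hδ₀' : δ₀ < 1 / Real.sqrt 2) (hε : 0 < ε) :
    ∃ N₀ : ℕ, ∀ N : ℕ, N₀ ≤ N →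
      ∀ (G : SimpleGraph (Fin N)) [DecidableRel G.Adj],
        ∀ dbar δrms : ℝ,
          dbar = (∑ i, (G.degree i : ℝ)) / N → 0 < dbar →
          δrms = Real.sqrt ((1 / (N : ℝ)) * ∑ i, ((G.degree i : ℝ) - dbar) ^ 2) / dbar →
          δrms ≤ δ₀ →
          ∀ (u : Fin N → ℝ) (lam : ℝ),
            (∑ i, (u i) ^ 2 = 1) → (G.adjMatrix ℝ).mulVec u = lam • u → lam < 0 →
            (∑ i, u i) ^ 2 ≤ (2 * δ₀ ^ 2 + ε) * ((N : ℝ) / 2 - Real.sqrt ((N : ℝ) - 1)) :=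
  stmt_9_general δ₀ ε hε
end

section
/- Let G be a finite simple graph on N vertices with M edges, adjacency matrix A, orthonormal eigenbasis {u_k} with eigenvalues ε_k, and uniform overlaps w_k = (𝟙ᵀu_k)². Let ε_max = max_k ε_k. Then for every index k with ε_k ≠ ε_max, one has w_k ≤ N·(ε_max − 2M/N)/(ε_max − ε_k). -/
/-!
With `c l = 𝟙ᵀ u l`, the spectral decomposition `A = ∑ ε l • u l u lᵀ` gives
`∑ c l ^ 2 = 𝟙ᵀ 𝟙 = N` and `∑ ε l * c l ^ 2 = 𝟙ᵀ A 𝟙 = 2M`. Hence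
`∑ c l ^ 2 * (ε_max - ε l) = N ε_max - 2M` is a sum of nonnegative terms, and bounds its `k`-th term.
-/

open Matrix

section Spectral

variable {ι R : Type*} [Fintype ι] [DecidableEq ι] [CommRing R]

theorem Matrix.eq_transpose_mul_diagonal_mul_of_mulVec_eq_smul {A U : Matrix ι ι R} {ε : ι → R}
    (hU : U * Uᵀ = 1) (heig : ∀ k, A *ᵥ U k = ε k • U k) : A = Uᵀ * diagonal ε * U := by
  have hAU : A * Uᵀ = Uᵀ * diagonal ε := by
    ext i k
    rw [mul_diagonal, transpose_apply, mul_comm]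
    simpa [mulVec, dotProduct, mul_apply] using congrFun (heig k) i
  rw [← hAU, Matrix.mul_assoc, mul_eq_one_comm.mp hU, Matrix.mul_one]

theorem Matrix.dotProduct_mulVec_eq_sum_mul_sq {A U : Matrix ι ι R} {ε : ι → R}
    (hU : U * Uᵀ = 1) (heig : ∀ k, A *ᵥ U k = ε k • U k) (x : ι → R) :
    x ⬝ᵥ (A *ᵥ x) = ∑ k, ε k * (U *ᵥ x) k ^ 2 := by
  rw [eq_transpose_mul_diagonal_mul_of_mulVec_eq_smul hU heig, ← mulVec_mulVec, ← mulVec_mulVec,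
    dotProduct_mulVec, vecMul_transpose]
  simp only [dotProduct, mulVec_diagonal]
  exact Finset.sum_congr rfl fun k _ => by ring

end Spectral

theorem mul_sub_le_sum_mul_sub {ι R : Type*} [Fintype ι] [CommRing R] [PartialOrder R]
    [IsOrderedRing R] {w ε : ι → R} {m : R}
    (hw : ∀ l, 0 ≤ w l) (hε : ∀ l, ε l ≤ m) (k : ι) :
    w k * (m - ε k) ≤ (∑ l, w l) * m - ∑ l, ε l * w l := by
  calc w k * (m - ε k) ≤ ∑ l, w l * (m - ε l) :=
        Finset.single_le_sum (f := fun l => w l * (m - ε l))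
          (fun l _ => mul_nonneg (hw l) (sub_nonneg.mpr (hε l))) (Finset.mem_univ k)
    _ = (∑ l, w l) * m - ∑ l, ε l * w l := by
        rw [Finset.sum_mul, ← Finset.sum_sub_distrib]
        exact Finset.sum_congr rfl fun l _ => by ring

theorem SimpleGraph.one_dotProduct_adjMatrix_mulVec_one {V R : Type*} [Fintype V]
    (G : SimpleGraph V) [DecidableRel G.Adj] [CommSemiring R] :
    (1 : V → R) ⬝ᵥ (G.adjMatrix R *ᵥ 1) = 2 * (G.edgeFinset.card : R) := by
  rw [dotProduct_comm, ← natCast_card_dart_eq_dotProduct, dart_card_eq_twice_card_edges]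
  push_cast; rfl

/-- Bound on uniform overlap growth: for a finite simple graph `G` on
`N` vertices with `M` edges, adjacency matrix with orthonormal eigenbasis `u k`,
eigenvalues `ε k`, uniform overlaps `w k = (𝟙ᵀ u k)²`, and largest eigenvalue `ε_max`,
every index `k` with `ε k ≠ ε_max` satisfies
`w k ≤ N (ε_max - 2M/N)/(ε_max - ε k)`. -/
theorem stmt_17 {N : ℕ} (G : SimpleGraph (Fin N)) [DecidableRel G.Adj]
    (u : Fin N → Fin N → ℝ) (ε : Fin N → ℝ)
    (horth : ∀ k l, (∑ i, u k i * u l i) = if k = l then (1 : ℝ) else 0)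
    (heig : ∀ k, (G.adjMatrix ℝ).mulVec (u k) = ε k • u k)
    (εmax : ℝ) (hεmax : IsGreatest (Set.range ε) εmax) :
    ∀ k, ε k ≠ εmax →
      (∑ i, u k i) ^ 2 ≤
        (N : ℝ) * (εmax - 2 * (G.edgeFinset.card : ℝ) / (N : ℝ)) / (εmax - ε k) := by
  intro k hk
  have hU : of u * (of u)ᵀ = 1 := by
    ext a b
    simpa [mul_apply, one_apply] using horth a b
  have hoverlap : ∀ l, (of u *ᵥ 1) l = ∑ i, u l i := fun l => by simp [mulVec, dotProduct]
  -- Parseval's identity is the case `A = 1` of the spectral quadratic form.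
  have hN : ∑ l, (∑ i, u l i) ^ 2 = N := by
    simpa [hoverlap] using
      (dotProduct_mulVec_eq_sum_mul_sq (A := 1) (ε := 1) hU (by simp) (1 : Fin N → ℝ)).symm
  have hM : ∑ l, ε l * (∑ i, u l i) ^ 2 = 2 * (G.edgeFinset.card : ℝ) := by
    simpa [hoverlap] using
      (dotProduct_mulVec_eq_sum_mul_sq hU heig 1).symm.trans G.one_dotProduct_adjMatrix_mulVec_one
  have hmax : ∀ l, ε l ≤ εmax := fun l => hεmax.2 ⟨l, rfl⟩
  have hgap : 0 < εmax - ε k := sub_pos.mpr ((hmax k).lt_of_ne hk)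
  have hNpos : (0 : ℝ) < N := by exact_mod_cast Fin.pos k
  rw [le_div_iff₀ hgap, mul_sub (N : ℝ), mul_div_cancel₀ _ hNpos.ne', ← hN, ← hM]
  exact mul_sub_le_sum_mul_sub (w := fun l => (∑ i, u l i) ^ 2) (fun l => sq_nonneg _) hmax k
end
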